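/- Let k ≥ h be non-negative integers and let N ≥ 1. Then |V|_N(2k,2h) = Σ_{j=0}^{h} binom(h,j) (−N²/4)^{h−j} Σ_{l=0}^{j} (𝔦N)^{j−l} binom(j,l) (M)_N(2k,j+l), where 𝔦 is the imaginary unit. -/

import Mathlib

open MeasureTheory Complex

noncomputable instance {N : ℕ} : MeasurableSpace (Matrix (Fin N) (Fin N) ℂ) := borel _

noncomputable def Zchar {N : ℕ} (U : Matrix.unitaryGroup (Fin N) ℂ) (θ : ℝ) : ℂ :=
  Matrix.det ((1 : Matrix (Fin N) (Fin N) ℂ)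
    - Complex.exp (-(Complex.I * (θ : ℂ))) • (U : Matrix (Fin N) (Fin N) ℂ))

noncomputable def Vchar {N : ℕ} (θj : Fin N → ℝ) (U : Matrix.unitaryGroup (Fin N) ℂ)
    (θ : ℝ) : ℂ :=
  Complex.exp (Complex.I * N * ((θ : ℂ) + (Real.pi : ℂ)) / 2)
    * Complex.exp (-(Complex.I * ((∑ j, θj j : ℝ) : ℂ)) / 2) * Zchar U θ

noncomputable def Mmom (N k r : ℕ) (μ : Measure (Matrix.unitaryGroup (Fin N) ℂ)) : ℂ :=
  ∫ U, (‖Zchar U 0‖ : ℂ) ^ (2 * k) * (deriv (Zchar U) 0 / Zchar U 0) ^ r ∂μ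

/-!
Write `w_j = e^{iθ_j}` for the eigenvalues, so that `Z_U(θ) = ∏ (1 - w_j e^{-iθ})` and, when
`Z_U(0) ≠ 0`, `z := Z_U'(0)/Z_U(0) = ∑ i w_j/(1 - w_j)`. The phase in `V_U` has modulus one and
logarithmic derivative `iN/2`, so `|V_U(0)| = |Z_U(0)|` and `ζ := V_U'(0)/V_U(0) = z + iN/2`. Since
`|w_j| = 1`, every `i w_j/(1 - w_j) + i/2` is real, hence so is `ζ`, and `|ζ|^{2h} = (ζ^2)^h` with
`ζ^2 = z^2 + iNz - N^2/4`. Two binomial expansions and termwise integration give the formula; each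
term `|Z|^{2k} (Z'/Z)^r` with `r ≤ 2k` is bounded by `|Z|^{2k-r} |Z'|^r`, hence integrable.
-/

open Finset ComplexConjugate

instance {N : ℕ} : BorelSpace (Matrix (Fin N) (Fin N) ℂ) := ⟨rfl⟩

theorem pow_sq_add_mul_add_eq_sum {R : Type*} [CommSemiring R] (z c d : R) (h : ℕ) :
    (z ^ 2 + c * z + d) ^ h = ∑ j ∈ range (h + 1), (h.choose j : R) * d ^ (h - j) *
      ∑ l ∈ range (j + 1), c ^ (j - l) * (j.choose l : R) * z ^ (j + l) := by
  rw [add_pow]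
  refine sum_congr rfl fun j _ => ?_
  rw [add_pow, sum_mul, sum_mul, mul_sum]
  refine sum_congr rfl fun l hl => ?_
  have hzz : z ^ (j + l) = (z ^ 2) ^ l * z ^ (j - l) := by
    rw [← pow_mul, ← pow_add]
    congr 1
    have := mem_range.mp hl
    omega
  rw [hzz, mul_pow]
  ring

theorem Complex.conj_I_mul_div_one_sub_add_I_div_two {w : ℂ} (hw : ‖w‖ = 1) (hw1 : w ≠ 1) :
    conj (I * w / (1 - w) + I / 2) = I * w / (1 - w) + I / 2 := by
  have hw0 : w ≠ 0 := by rintro rfl; simp at hw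
  have hconj : conj w = w⁻¹ := by
    refine eq_inv_of_mul_eq_one_right ?_
    rw [mul_conj, normSq_eq_norm_sq, hw]
    norm_num
  have h1w : 1 - w ≠ 0 := sub_ne_zero.mpr (Ne.symm hw1)
  simp only [map_add, map_div₀, map_mul, map_sub, map_one, conj_I, hconj, map_ofNat]
  field_simp
  ring

theorem Finset.sum_prod_erase_mul_div_prod {ι K : Type*} [DecidableEq ι] [Field K]
    (s : Finset ι) (f g : ι → K) (hf : ∀ j ∈ s, f j ≠ 0) :
    (∑ j ∈ s, (∏ m ∈ s.erase j, f m) * g j) / ∏ j ∈ s, f j = ∑ j ∈ s, g j / f j := by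
  rw [sum_div]
  refine sum_congr rfl fun j hj => ?_
  have herase : ∏ m ∈ s.erase j, f m ≠ 0 :=
    prod_ne_zero_iff.mpr fun m hm => hf m (mem_of_mem_erase hm)
  rw [← mul_prod_erase s f hj]
  field_simp [hf j hj]

theorem Complex.norm_prod_one_sub_le {ι : Type*} (s : Finset ι) {w : ι → ℂ}
    (hw : ∀ j, ‖w j‖ = 1) : ‖∏ j ∈ s, (1 - w j)‖ ≤ 2 ^ #s := by
  rw [norm_prod, ← prod_const]
  refine prod_le_prod (fun _ _ => norm_nonneg _) fun j _ => ?_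
  calc ‖1 - w j‖ ≤ ‖(1 : ℂ)‖ + ‖w j‖ := norm_sub_le _ _
    _ = 2 := by rw [norm_one, hw j]; norm_num

theorem norm_pow_mul_div_pow_le {K : Type*} [NormedField K] (a b : K) {n r : ℕ} (hr : r ≤ n) :
    ‖a‖ ^ n * ‖b / a‖ ^ r ≤ ‖a‖ ^ (n - r) * ‖b‖ ^ r := by
  rcases eq_or_ne a 0 with rfl | ha
  · rcases r.eq_zero_or_pos with rfl | hr0
    · simp
    · rw [div_zero, norm_zero, zero_pow hr0.ne', mul_zero]
      positivity
  · rw [norm_div, div_pow, ← Nat.sub_add_cancel hr, pow_add, Nat.add_sub_cancel]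
    field_simp
    rfl

theorem hasDerivAt_one_sub_mul_exp_neg_I_mul (a : ℂ) (θ : ℝ) :
    HasDerivAt (fun θ : ℝ => 1 - a * exp (-(I * θ))) (I * a * exp (-(I * θ))) θ := by
  have hlin : HasDerivAt (fun z : ℂ => -(I * z)) (-I) θ := by
    simpa using ((hasDerivAt_id (θ : ℂ)).const_mul I).fun_neg
  exact (((hlin.cexp.comp_ofReal).const_mul a).const_sub 1).congr_deriv (by ring)

theorem Matrix.det_one_sub_smul_eq_prod {n : Type*} [Fintype n] [DecidableEq n]
    {M : Matrix n n ℂ} {w : n → ℂ}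
    (hp : M.charpoly = ∏ j, (Polynomial.X - Polynomial.C (w j))) (t : ℂ) :
    (1 - t • M).det = ∏ j, (1 - w j * t) := by
  rcases eq_or_ne t 0 with rfl | ht
  · simp
  have hscale : 1 - t • M = t • (scalar n t⁻¹ - M) := by
    rw [smul_sub, scalar_apply, ← smul_one_eq_diagonal, smul_smul, mul_inv_cancel₀ ht, one_smul]
  rw [hscale, det_smul, ← eval_charpoly, hp, Polynomial.eval_prod, ← card_univ, ← prod_const,
    ← prod_mul_distrib]
  refine prod_congr rfl fun j _ => ?_
  simp only [Polynomial.eval_sub, Polynomial.eval_X, Polynomial.eval_C]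
  field_simp

section Zchar

variable {N : ℕ} {U : Matrix.unitaryGroup (Fin N) ℂ} {w : Fin N → ℂ}

theorem Zchar_eq_prod
    (hp : (U : Matrix (Fin N) (Fin N) ℂ).charpoly = ∏ j, (Polynomial.X - Polynomial.C (w j)))
    (θ : ℝ) : Zchar U θ = ∏ j, (1 - w j * exp (-(I * θ))) :=
  Matrix.det_one_sub_smul_eq_prod hp _

theorem Zchar_zero_eq_prod
    (hp : (U : Matrix (Fin N) (Fin N) ℂ).charpoly = ∏ j, (Polynomial.X - Polynomial.C (w j))) :
    Zchar U 0 = ∏ j, (1 - w j) := by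
  simp [Zchar_eq_prod hp]

theorem hasDerivAt_Zchar_zero
    (hp : (U : Matrix (Fin N) (Fin N) ℂ).charpoly = ∏ j, (Polynomial.X - Polynomial.C (w j))) :
    HasDerivAt (Zchar U) (∑ j, (∏ m ∈ univ.erase j, (1 - w m)) * (I * w j)) 0 := by
  rw [funext (Zchar_eq_prod hp)]
  simpa using HasDerivAt.fun_finsetProd (u := univ) (x := (0 : ℝ))
    fun j _ => hasDerivAt_one_sub_mul_exp_neg_I_mul (w j) 0

theorem conj_deriv_Zchar_div_Zchar_add
    (hp : (U : Matrix (Fin N) (Fin N) ℂ).charpoly = ∏ j, (Polynomial.X - Polynomial.C (w j)))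
    (hw : ∀ j, ‖w j‖ = 1) (hZ : Zchar U 0 ≠ 0) :
    conj (deriv (Zchar U) 0 / Zchar U 0 + I * N / 2)
      = deriv (Zchar U) 0 / Zchar U 0 + I * N / 2 := by
  rw [Zchar_zero_eq_prod hp] at hZ ⊢
  have hw1 : ∀ j ∈ univ, 1 - w j ≠ 0 := fun j hj => prod_ne_zero_iff.mp hZ j hj
  have hsum : deriv (Zchar U) 0 / ∏ j, (1 - w j) + I * N / 2
      = ∑ j, (I * w j / (1 - w j) + I / 2) := by
    rw [(hasDerivAt_Zchar_zero hp).deriv, sum_prod_erase_mul_div_prod _ _ _ hw1, sum_add_distrib]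
    simp only [sum_const, card_univ, Fintype.card_fin, nsmul_eq_mul]
    ring
  rw [hsum, map_sum]
  exact sum_congr rfl fun j hj =>
    conj_I_mul_div_one_sub_add_I_div_two (hw j) fun h => hw1 j hj (by rw [h, sub_self])

theorem norm_Zchar_zero_le
    (hp : (U : Matrix (Fin N) (Fin N) ℂ).charpoly = ∏ j, (Polynomial.X - Polynomial.C (w j)))
    (hw : ∀ j, ‖w j‖ = 1) : ‖Zchar U 0‖ ≤ 2 ^ N := by
  simpa [Zchar_zero_eq_prod hp] using norm_prod_one_sub_le univ hw

theorem norm_deriv_Zchar_zero_le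
    (hp : (U : Matrix (Fin N) (Fin N) ℂ).charpoly = ∏ j, (Polynomial.X - Polynomial.C (w j)))
    (hw : ∀ j, ‖w j‖ = 1) : ‖deriv (Zchar U) 0‖ ≤ N * 2 ^ N := by
  rw [(hasDerivAt_Zchar_zero hp).deriv]
  refine (norm_sum_le _ _).trans ?_
  have hterm : ∀ j, ‖(∏ m ∈ univ.erase j, (1 - w m)) * (I * w j)‖ ≤ 2 ^ N := fun j => by
    rw [norm_mul, norm_mul, norm_I, hw j, one_mul, mul_one]
    exact (norm_prod_one_sub_le _ hw).trans
      (pow_le_pow_right₀ one_le_two ((card_le_univ _).trans (Fintype.card_fin N).le))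
  simpa using sum_le_sum fun j (_ : j ∈ univ) => hterm j

end Zchar

theorem norm_Vchar {N : ℕ} (θv : Fin N → ℝ) (U : Matrix.unitaryGroup (Fin N) ℂ) (θ : ℝ) :
    ‖Vchar θv U θ‖ = ‖Zchar U θ‖ := by
  simp [Vchar, norm_exp]

theorem deriv_Vchar_div_Vchar {N : ℕ} (θv : Fin N → ℝ) {U : Matrix.unitaryGroup (Fin N) ℂ}
    (hZd : DifferentiableAt ℝ (Zchar U) 0) (hZ : Zchar U 0 ≠ 0) :
    deriv (Vchar θv U) 0 / Vchar θv U 0 = deriv (Zchar U) 0 / Zchar U 0 + I * N / 2 := by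
  have hlin : HasDerivAt (fun z : ℂ => I * N * (z + (Real.pi : ℂ)) / 2) (I * N / 2)
      ((0 : ℝ) : ℂ) := by
    simpa using (((hasDerivAt_id _).add_const _).const_mul (I * N)).div_const 2
  have hV : HasDerivAt (Vchar θv U) _ 0 := ((hlin.cexp.comp_ofReal).mul_const
    (exp (-(I * ((∑ j, θv j : ℝ) : ℂ)) / 2))).mul hZd.hasDerivAt
  rw [hV.deriv, Vchar]
  field_simp
  ring

theorem Vchar_moment_integrand_eq {N k h : ℕ} (hkh : h ≤ k) (θv : Fin N → ℝ)
    (U : Matrix.unitaryGroup (Fin N) ℂ)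
    (hp : (U : Matrix (Fin N) (Fin N) ℂ).charpoly
      = ∏ j, (Polynomial.X - Polynomial.C (exp (I * (θv j : ℂ))))) :
    ((‖Vchar θv U 0‖ ^ (2 * k) * ‖deriv (Vchar θv U) 0 / Vchar θv U 0‖ ^ (2 * h) : ℝ) : ℂ)
      = (‖Zchar U 0‖ : ℂ) ^ (2 * k) * ((deriv (Zchar U) 0 / Zchar U 0) ^ 2
          + I * N * (deriv (Zchar U) 0 / Zchar U 0) + -(N : ℂ) ^ 2 / 4) ^ h := by
  rw [norm_Vchar]
  by_cases hZ : Zchar U 0 = 0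
  · rcases k.eq_zero_or_pos with rfl | hk
    · obtain rfl : h = 0 := by omega
      simp
    · simp [hZ, zero_pow (by omega : 2 * k ≠ 0)]
  rw [deriv_Vchar_div_Vchar θv (hasDerivAt_Zchar_zero hp).differentiableAt hZ]
  set ζ := deriv (Zchar U) 0 / Zchar U 0 + I * N / 2 with hζ
  have hnorm : ((‖ζ‖ ^ 2 : ℝ) : ℂ) = ζ ^ 2 := by
    rw [← normSq_eq_norm_sq, ← mul_conj,
      conj_deriv_Zchar_div_Zchar_add hp (fun _ => norm_exp_I_mul_ofReal _) hZ, sq]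
  calc ((‖Zchar U 0‖ ^ (2 * k) * ‖ζ‖ ^ (2 * h) : ℝ) : ℂ)
      = (‖Zchar U 0‖ : ℂ) ^ (2 * k) * ((‖ζ‖ ^ 2 : ℝ) : ℂ) ^ h := by push_cast; ring
    _ = _ := by
      rw [hnorm, hζ]
      congr 2
      linear_combination (N : ℂ) ^ 2 / 4 * I_sq

theorem continuous_Zchar_uncurry {N : ℕ} :
    Continuous fun p : Matrix.unitaryGroup (Fin N) ℂ × ℝ => Zchar p.1 p.2 := by
  unfold Zchar
  fun_prop

theorem measurable_deriv_Zchar_zero {N : ℕ} :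
    Measurable fun U : Matrix.unitaryGroup (Fin N) ℂ => deriv (Zchar U) 0 := by
  have h := measurable_deriv_with_param (𝕜 := ℝ) (F := ℂ) (f := fun U θ => Zchar U θ)
    (continuous_Zchar_uncurry (N := N))
  exact h.comp (f := fun U => (U, (0 : ℝ))) (measurable_id.prodMk measurable_const)

theorem integrable_Zchar_moment_integrand {N k r : ℕ} (hr : r ≤ 2 * k)
    (μ : Measure (Matrix.unitaryGroup (Fin N) ℂ)) [IsFiniteMeasure μ]
    (θj : Matrix.unitaryGroup (Fin N) ℂ → Fin N → ℝ)
    (hθj : ∀ U : Matrix.unitaryGroup (Fin N) ℂ, (U : Matrix (Fin N) (Fin N) ℂ).charpoly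
      = ∏ j, (Polynomial.X - Polynomial.C (exp (I * (θj U j : ℂ))))) :
    Integrable (fun U => (‖Zchar U 0‖ : ℂ) ^ (2 * k) * (deriv (Zchar U) 0 / Zchar U 0) ^ r) μ := by
  have hZ : Measurable fun U : Matrix.unitaryGroup (Fin N) ℂ => Zchar U 0 :=
    (continuous_Zchar_uncurry.comp (continuous_id.prodMk continuous_const)).measurable
  have hmeas := ((measurable_ofReal.comp hZ.norm).pow_const (2 * k)).mul
    ((measurable_deriv_Zchar_zero.div hZ).pow_const r)
  refine (integrable_const (((2 : ℝ) ^ N) ^ (2 * k - r) * (N * 2 ^ N) ^ r)).mono'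
    hmeas.aestronglyMeasurable (ae_of_all _ fun U => ?_)
  have hw (j : Fin N) : ‖exp (I * (θj U j : ℂ))‖ = 1 := norm_exp_I_mul_ofReal _
  rw [norm_mul, norm_pow, norm_pow, norm_real, norm_norm]
  calc _ ≤ ‖Zchar U 0‖ ^ (2 * k - r) * ‖deriv (Zchar U) 0‖ ^ r := norm_pow_mul_div_pow_le _ _ hr
    _ ≤ _ := by
      gcongr
      exacts [norm_Zchar_zero_le (hθj U) hw, norm_deriv_Zchar_zero_le (hθj U) hw]

theorem integral_sum_range_mul_sum_range {α : Type*} [MeasurableSpace α] {μ : Measure α} {h : ℕ}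
    (F : ℕ → α → ℂ) (hF : ∀ r ≤ 2 * h, Integrable (F r) μ) (a : ℕ → ℂ) (b : ℕ → ℕ → ℂ) :
    ∫ x, ∑ j ∈ range (h + 1), a j * ∑ l ∈ range (j + 1), b j l * F (j + l) x ∂μ
      = ∑ j ∈ range (h + 1), a j * ∑ l ∈ range (j + 1), b j l * ∫ x, F (j + l) x ∂μ := by
  have hint : ∀ j ∈ range (h + 1), ∀ l ∈ range (j + 1),
      Integrable (fun x => b j l * F (j + l) x) μ := fun j hj l hl =>
    (hF _ (by rw [mem_range] at hj hl; omega)).const_mul _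
  rw [integral_finsetSum _ fun j hj => (integrable_finsetSum _ (hint j hj)).const_mul _]
  refine sum_congr rfl fun j hj => ?_
  rw [integral_const_mul, integral_finsetSum _ (hint j hj)]
  simp_rw [integral_const_mul]

theorem statement1_general (N k h : ℕ) (hkh : h ≤ k)
    (μham : Measure (Matrix.unitaryGroup (Fin N) ℂ))
    [IsProbabilityMeasure μham]
    (θj : Matrix.unitaryGroup (Fin N) ℂ → Fin N → ℝ)
    (hθj : ∀ U : Matrix.unitaryGroup (Fin N) ℂ,
      (U : Matrix (Fin N) (Fin N) ℂ).charpoly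
        = ∏ j, (Polynomial.X - Polynomial.C (Complex.exp (Complex.I * (θj U j : ℂ))))) :
    ((∫ U, ‖Vchar (θj U) U 0‖ ^ (2 * k)
        * ‖deriv (Vchar (θj U) U) 0 / Vchar (θj U) U 0‖ ^ (2 * h) ∂μham : ℝ) : ℂ)
      = ∑ j ∈ Finset.range (h + 1),
          (Nat.choose h j : ℂ) * (-(N : ℂ) ^ 2 / 4) ^ (h - j)
            * ∑ l ∈ Finset.range (j + 1),
                (Complex.I * N) ^ (j - l) * (Nat.choose j l : ℂ) * Mmom N k (j + l) μham := by
  set F : ℕ → Matrix.unitaryGroup (Fin N) ℂ → ℂ :=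
    fun r U => (‖Zchar U 0‖ : ℂ) ^ (2 * k) * (deriv (Zchar U) 0 / Zchar U 0) ^ r
  have hexpand : ∀ U, ((‖Vchar (θj U) U 0‖ ^ (2 * k)
      * ‖deriv (Vchar (θj U) U) 0 / Vchar (θj U) U 0‖ ^ (2 * h) : ℝ) : ℂ)
        = ∑ j ∈ range (h + 1), (h.choose j : ℂ) * (-(N : ℂ) ^ 2 / 4) ^ (h - j)
            * ∑ l ∈ range (j + 1), (I * N) ^ (j - l) * (j.choose l : ℂ) * F (j + l) U := by
    intro U
    rw [Vchar_moment_integrand_eq hkh _ U (hθj U), pow_sq_add_mul_add_eq_sum, mul_sum]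
    refine sum_congr rfl fun j _ => ?_
    rw [mul_sum, mul_sum, mul_sum]
    exact sum_congr rfl fun l _ => by ring
  rw [← integral_complex_ofReal, integral_congr_ae (ae_of_all _ hexpand)]
  exact integral_sum_range_mul_sum_range F
    (fun r hr => integrable_Zchar_moment_integrand (by omega) μham θj hθj) _ _

theorem statement1 (N k h : ℕ) (hN : 1 ≤ N) (hkh : h ≤ k)
    (μham : Measure (Matrix.unitaryGroup (Fin N) ℂ))
    [μham.IsHaarMeasure] [IsProbabilityMeasure μham]
    (θj : Matrix.unitaryGroup (Fin N) ℂ → Fin N → ℝ)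
    (hθj : ∀ U : Matrix.unitaryGroup (Fin N) ℂ,
      (U : Matrix (Fin N) (Fin N) ℂ).charpoly
        = ∏ j, (Polynomial.X - Polynomial.C (Complex.exp (Complex.I * (θj U j : ℂ))))) :
    ((∫ U, ‖Vchar (θj U) U 0‖ ^ (2 * k)
        * ‖deriv (Vchar (θj U) U) 0 / Vchar (θj U) U 0‖ ^ (2 * h) ∂μham : ℝ) : ℂ)
      = ∑ j ∈ Finset.range (h + 1),
          (Nat.choose h j : ℂ) * (-(N : ℂ) ^ 2 / 4) ^ (h - j)
            * ∑ l ∈ Finset.range (j + 1),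
                (Complex.I * N) ^ (j - l) * (Nat.choose j l : ℂ) * Mmom N k (j + l) μham :=
  statement1_general N k h hkh μham θj hθj
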